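/- Define the universal colourful tree U^ℓ_{(c₀,C)} recursively: if C = ∅, it is a root with 2^ℓ uncoloured leaves; if ℓ = 0 and C = {c₁,…,c_h}, it is ⟨c₀, ⟨U^0_{(c₁,C∖{c₁})},…,U^0_{(c_h,C∖{c_h})}, ⊥-leaf⟩⟩; if ℓ > 0 and C ≠ ∅, it is the concatenation U^{ℓ-1}_{(c₀,C)} · ⟨c₀, ⟨U^ℓ_{(c₁,C∖{c₁})},…,U^ℓ_{(c_h,C∖{c_h})}, ⊥-leaf⟩⟩ · U^{ℓ-1}_{(c₀,C)}. Then U^ℓ_{(c₀,C)} embeds every (c₀,C)-colourful tree with at most 2^ℓ leaves. -/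
import Mathlib


universe u

/-- Rose trees whose nodes carry an optional colour (`none` is the dummy
colour `⊥`). -/
inductive RTree (γ : Type*) : Type _
  | node : Option γ → List (RTree γ) → RTree γ

/-- The colour at the root of a tree. -/
def RTree.label {γ : Type*} : RTree γ → Option γ
  | .node l _ => l

mutual
  /-- `IsCol c₀ C t`: `t` is a `(c₀, C)`-colourful tree. -/
  inductive IsCol {γ : Type u} [DecidableEq γ] : γ → Finset γ → RTree γ → Prop
    | subset {c₀ : γ} {C C' : Finset γ} {t : RTree γ} :
        C' ⊂ C → IsCol c₀ C' t → IsCol c₀ C t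
    | node {c₀ : γ} {C : Finset γ} {ts : List (RTree γ)} :
        IsColList C ts → IsCol c₀ C (RTree.node (some c₀) ts)

  /-- Children of a node of a `(·, C)`-colourful tree. -/
  inductive IsColList {γ : Type u} [DecidableEq γ] : Finset γ → List (RTree γ) → Prop
    | nil {C : Finset γ} : IsColList C []
    | consLeaf {C : Finset γ} {ts : List (RTree γ)} :
        IsColList C ts → IsColList C (RTree.node none [] :: ts)
    | consCol {C : Finset γ} {c : γ} {t : RTree γ} {ts : List (RTree γ)} :
        c ∈ C → t.label = some c → IsCol c (C.erase c) t →
        IsColList C ts → IsColList C (t :: ts)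
end

mutual
  /-- `Embeds U T`: the colourful tree `U` embeds the colourful tree `T`. -/
  inductive Embeds {γ : Type u} : RTree γ → RTree γ → Prop
    | node {l : Option γ} {us ts : List (RTree γ)} :
        EmbedsList us ts → Embeds (RTree.node l us) (RTree.node l ts)

  /-- `EmbedsList us ts`: the trees of `ts` embed, in order, into a
  subsequence of `us`. -/
  inductive EmbedsList {γ : Type u} : List (RTree γ) → List (RTree γ) → Prop
    | nil {us : List (RTree γ)} : EmbedsList us []
    | cons {u : RTree γ} {us : List (RTree γ)} {t : RTree γ} {ts : List (RTree γ)} :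
        Embeds u t → EmbedsList us ts → EmbedsList (u :: us) (t :: ts)
    | skip {u : RTree γ} {us ts : List (RTree γ)} :
        EmbedsList us ts → EmbedsList (u :: us) ts
end

/-- Number of leaves of a tree. -/
def RTree.leaves {γ : Type*} : RTree γ → ℕ
  | .node _ [] => 1
  | .node l (t :: ts) => t.leaves + (RTree.node l ts).leaves

/-- Concatenation of two trees with the same root colour: join the child
lists. -/
def RTree.cat {γ : Type*} : RTree γ → RTree γ → RTree γ
  | .node l ts, .node _ us => .node l (ts ++ us)

/-- The universal colourful tree `U^ℓ_{(c₀,C)}`. -/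
def UT {γ : Type u} [DecidableEq γ] : ℕ → γ → List γ → RTree γ
  | ℓ, c₀, [] => .node (some c₀) (List.replicate (2 ^ ℓ) (.node none []))
  | 0, c₀, c₁ :: rest =>
      .node (some c₀)
        (((c₁ :: rest).attach.map fun c => UT 0 c.1 ((c₁ :: rest).erase c.1)) ++
          [.node none []])
  | (ℓ + 1), c₀, c₁ :: rest =>
      RTree.cat
        (RTree.cat (UT ℓ c₀ (c₁ :: rest))
          (.node (some c₀)
            (((c₁ :: rest).attach.map fun c =>
                UT (ℓ + 1) c.1 ((c₁ :: rest).erase c.1)) ++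
              [.node none []])))
        (UT ℓ c₀ (c₁ :: rest))
  termination_by ℓ _ C => (ℓ, C.length)
  decreasing_by
  all_goals simp_wf
  all_goals first
    | exact Prod.Lex.left _ _ (Nat.lt_succ_self ℓ)
    | · have h2 := List.length_erase_of_mem c.2
        exact Prod.Lex.right _ (by simp_all)

section Aux

variable {γ : Type u}

theorem leaves_node (l : Option γ) (ts : List (RTree γ)) :
    (RTree.node l ts).leaves = (ts.map RTree.leaves).sum + 1 := by
  induction ts with
  | nil => simp [RTree.leaves]
  | cons t ts ih => simp [RTree.leaves, ih]; omega

theorem leaves_pos (t : RTree γ) : 1 ≤ t.leaves := by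
  cases t with
  | node l ts => rw [leaves_node]; omega

theorem embedsList_skipAll {us vs ts : List (RTree γ)} (h : EmbedsList vs ts) :
    EmbedsList (us ++ vs) ts := by
  induction us with
  | nil => exact h
  | cons u us ih => exact .skip ih

theorem embedsList_extend {us vs ts : List (RTree γ)} (h : EmbedsList us ts) :
    EmbedsList (us ++ vs) ts := by
  induction us generalizing ts with
  | nil => cases h; exact .nil
  | cons u us ih =>
    cases h with
    | nil => exact .nil
    | cons h1 h2 => exact .cons h1 (ih h2)
    | skip h => exact .skip (ih h)

theorem embedsList_append {us vs ts ss : List (RTree γ)} (h : EmbedsList us ts)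
    (h' : EmbedsList vs ss) : EmbedsList (us ++ vs) (ts ++ ss) := by
  induction us generalizing ts with
  | nil => cases h; exact h'
  | cons u us ih =>
    cases h with
    | nil => exact embedsList_skipAll h'
    | cons h1 h2 => exact .cons h1 (ih h2)
    | skip h => exact .skip (ih h)

theorem embedsList_of_mem {us : List (RTree γ)} {u t : RTree γ} (hm : u ∈ us)
    (h : Embeds u t) : EmbedsList us [t] := by
  induction us with
  | nil => cases hm
  | cons v vs ih =>
    rcases List.mem_cons.1 hm with rfl | hm
    · exact .cons h .nil
    · exact .skip (ih hm)

end Aux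

section Aux2

variable {γ : Type u} [DecidableEq γ]

theorem isCol_mono {c : γ} {D D' : Finset γ} {t : RTree γ} (h : D ⊆ D')
    (ht : IsCol c D t) : IsCol c D' t := by
  rcases eq_or_lt_of_le (Finset.le_iff_subset.2 h) with rfl | hlt
  · exact ht
  · exact .subset hlt ht

theorem isColList_mono {D D' : Finset γ} {ts : List (RTree γ)} (h : D ⊆ D')
    (ht : IsColList D ts) : IsColList D' ts := by
  induction ts with
  | nil => exact .nil
  | cons t ts ih =>
    cases ht with
    | consLeaf h2 => exact .consLeaf (ih h2)
    | consCol hc hlab hcol h2 =>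
      exact .consCol (h hc) hlab (isCol_mono (Finset.erase_subset_erase _ h) hcol) (ih h2)

theorem isCol_node {c : γ} {D : Finset γ} {t : RTree γ} (ht : IsCol c D t) :
    ∃ ts, t = RTree.node (some c) ts ∧ IsColList D ts := by
  obtain ⟨n, hn⟩ : ∃ n, D.card ≤ n := ⟨D.card, le_refl _⟩
  induction n generalizing D with
  | zero =>
    cases ht with
    | subset hss h => exact absurd (Finset.card_lt_card hss) (by omega)
    | node h => exact ⟨_, rfl, h⟩
  | succ n ih =>
    cases ht with
    | subset hss h =>
      obtain ⟨ts, rfl, hts⟩ := ih h (by have := Finset.card_lt_card hss; omega)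
      exact ⟨ts, rfl, isColList_mono hss.subset hts⟩
    | node h => exact ⟨_, rfl, h⟩

theorem isColList_append {D : Finset γ} {ts₁ ts₂ : List (RTree γ)}
    (h : IsColList D (ts₁ ++ ts₂)) : IsColList D ts₁ ∧ IsColList D ts₂ := by
  induction ts₁ with
  | nil => exact ⟨.nil, h⟩
  | cons t ts ih =>
    cases h with
    | consLeaf h2 => obtain ⟨a, b⟩ := ih h2; exact ⟨.consLeaf a, b⟩
    | consCol hc hlab hcol h2 => obtain ⟨a, b⟩ := ih h2; exact ⟨.consCol hc hlab hcol a, b⟩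

omit [DecidableEq γ] in
theorem exists_split (f : RTree γ → ℕ) (ts : List (RTree γ)) (k : ℕ) :
    ∃ ts₁ ts₂, ts = ts₁ ++ ts₂ ∧ (ts₁.map f).sum ≤ k ∧
      (∀ tm ts₃, ts₂ = tm :: ts₃ → k < (ts₁.map f).sum + f tm) := by
  induction ts generalizing k with
  | nil => exact ⟨[], [], by simp, by simp, by simp⟩
  | cons t ts ih =>
    by_cases h : f t ≤ k
    · obtain ⟨ts₁, ts₂, rfl, h1, h2⟩ := ih (k - f t)
      refine ⟨t :: ts₁, ts₂, rfl, by simp; omega, ?_⟩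
      intro tm ts₃ he
      have := h2 tm ts₃ he
      simp only [List.map_cons, List.sum_cons]
      omega
    · exact ⟨[], t :: ts, rfl, by simp, by rintro tm ts₃ ⟨rfl, rfl⟩; simpa using h⟩

theorem UT_shape (ℓ : ℕ) (c₀ : γ) (C : List γ) :
    ∃ us, UT ℓ c₀ C = RTree.node (some c₀) us := by
  induction ℓ with
  | zero =>
    cases C with
    | nil => exact ⟨_, by rw [UT]⟩
    | cons c₁ rest => exact ⟨_, by rw [UT]⟩
  | succ ℓ ih =>
    cases C with
    | nil => exact ⟨_, by rw [UT]⟩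
    | cons c₁ rest =>
      obtain ⟨us, hus⟩ := ih
      refine ⟨(us ++ (((c₁ :: rest).attach.map fun c =>
          UT (ℓ + 1) c.1 ((c₁ :: rest).erase c.1)) ++ [.node none []])) ++ us, ?_⟩
      rw [UT, hus]
      rfl

end Aux2

section Main

variable {γ : Type u} [DecidableEq γ]

omit [DecidableEq γ] in
theorem length_le_sum_leaves (ts : List (RTree γ)) :
    ts.length ≤ (ts.map RTree.leaves).sum := by
  induction ts with
  | nil => simp
  | cons t ts ih => have := leaves_pos t; simp; omega

theorem isColList_empty {ts : List (RTree γ)} (h : IsColList (∅ : Finset γ) ts) :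
    ∀ t ∈ ts, t = RTree.node none [] := by
  induction ts with
  | nil => simp
  | cons t ts ih =>
    cases h with
    | consLeaf h2 => simpa using ih h2
    | consCol hc _ _ _ => exact absurd hc (Finset.notMem_empty _)

omit [DecidableEq γ] in
theorem embedsList_replicate {ts : List (RTree γ)} {k : ℕ} (hk : ts.length ≤ k)
    (h : ∀ t ∈ ts, t = RTree.node none []) :
    EmbedsList (List.replicate k (RTree.node none [] : RTree γ)) ts := by
  induction ts generalizing k with
  | nil => exact .nil
  | cons t ts ih =>
    cases k with
    | zero => simp at hk
    | succ k =>
      rw [List.replicate_succ]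
      obtain rfl := h t (by simp)
      exact .cons (.node .nil) (ih (by simpa using hk) fun t ht => h t (by simp [ht]))

theorem main (ℓ : ℕ) (C : List γ) (hC : C.Nodup) (c₀ : γ) (D : Finset γ)
    (hD : D ⊆ C.toFinset) (t : RTree γ) (ht : IsCol c₀ D t)
    (hl : t.leaves ≤ 2 ^ ℓ) : Embeds (UT ℓ c₀ C) t := by
  obtain ⟨ts, rfl, hts⟩ := isCol_node ht
  rw [leaves_node] at hl
  have hone : 1 ≤ 2 ^ ℓ := Nat.one_le_two_pow
  cases C with
  | nil =>
    rw [UT]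
    have hD' : D = ∅ := Finset.subset_empty.1 (by simpa using hD)
    subst hD'
    have hlen := length_le_sum_leaves ts
    exact .node (embedsList_replicate (by omega) (isColList_empty hts))
  | cons c₁ rest =>
    cases ℓ with
    | zero =>
      have hlen := length_le_sum_leaves ts
      have : ts = [] := List.length_eq_zero_iff.1 (by rw [pow_zero] at hl; omega)
      subst this
      rw [UT]
      exact .node .nil
    | succ ℓ =>
      have hone' : 1 ≤ 2 ^ ℓ := Nat.one_le_two_pow
      have hpow : 2 ^ (ℓ + 1) = 2 ^ ℓ * 2 := pow_succ 2 ℓ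
      obtain ⟨A, hA⟩ := UT_shape ℓ c₀ (c₁ :: rest)
      have hUT : UT (ℓ + 1) c₀ (c₁ :: rest) = RTree.node (some c₀)
          ((A ++ (((c₁ :: rest).attach.map fun c =>
              UT (ℓ + 1) c.1 ((c₁ :: rest).erase c.1)) ++ [.node none []])) ++ A) := by
        rw [UT, hA]; rfl
      rw [hUT]
      obtain ⟨ts₁, ts₂, rfl, h1, h2⟩ := exists_split RTree.leaves ts (2 ^ ℓ - 1)
      obtain ⟨hts₁, hts₂⟩ := isColList_append hts
      rw [List.map_append, List.sum_append] at hl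
      have e₁ : EmbedsList A ts₁ := by
        have := main ℓ (c₁ :: rest) hC c₀ D hD (RTree.node (some c₀) ts₁)
          (.node hts₁) (by rw [leaves_node]; omega)
        rw [hA] at this; cases this; assumption
      cases ts₂ with
      | nil =>
        rw [List.append_nil]
        exact .node (embedsList_extend (embedsList_extend e₁))
      | cons tm ts₃ =>
        have hk := h2 tm ts₃ rfl
        simp only [List.map_cons, List.sum_cons] at hl
        have htm : tm.leaves ≤ 2 ^ (ℓ + 1) := by have := leaves_pos tm; omega
        have e₂ : EmbedsList (((c₁ :: rest).attach.map fun c =>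
            UT (ℓ + 1) c.1 ((c₁ :: rest).erase c.1)) ++ [RTree.node none []]) [tm] ∧
            IsColList D ts₃ := by
          cases hts₂ with
          | consLeaf h3 =>
            exact ⟨embedsList_skipAll (.cons (.node .nil) .nil), h3⟩
          | consCol hc hlab hcol h3 =>
            rename_i c
            have hcmem : c ∈ c₁ :: rest := List.mem_toFinset.1 (hD hc)
            have hmem : UT (ℓ + 1) c ((c₁ :: rest).erase c) ∈
                ((c₁ :: rest).attach.map fun c =>
                  UT (ℓ + 1) c.1 ((c₁ :: rest).erase c.1)) :=
              List.mem_map.2 ⟨⟨c, hcmem⟩, List.mem_attach _ _, rfl⟩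
            have hsub : D.erase c ⊆ ((c₁ :: rest).erase c).toFinset := by
              intro x hx
              rw [List.mem_toFinset, List.mem_erase_of_ne (Finset.ne_of_mem_erase hx)]
              exact List.mem_toFinset.1 (hD (Finset.mem_of_mem_erase hx))
            have := main (ℓ + 1) ((c₁ :: rest).erase c) (hC.erase _) c
              (D.erase c) hsub tm hcol htm
            exact ⟨embedsList_of_mem (List.mem_append_left _ hmem) this, h3⟩
        have e₃ : EmbedsList A ts₃ := by
          have := main ℓ (c₁ :: rest) hC c₀ D hD (RTree.node (some c₀) ts₃)
            (.node e₂.2) (by rw [leaves_node]; omega)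
          rw [hA] at this; cases this; assumption
        have := embedsList_append (embedsList_append e₁ e₂.1) e₃
        refine .node ?_
        simpa using this
  termination_by (ℓ, C.length)
  decreasing_by
  all_goals simp_wf
  all_goals subst_vars
  all_goals first
    | exact Prod.Lex.left _ _ (Nat.lt_succ_self _)
    | · have hle := List.length_erase_of_mem hcmem
        refine Prod.Lex.right _ ?_
        simp only [List.length_cons] at hle ⊢
        omega

end Main


/-- the universal tree `U^ℓ_{(c₀,C)}` embeds every
`(c₀,C)`-colourful tree with at most `2^ℓ` leaves. -/
theorem stmt11 {γ : Type u} [DecidableEq γ] (ℓ : ℕ) (c₀ : γ) (C : List γ)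
    (hC : C.Nodup) (t : RTree γ)
    (ht : IsCol c₀ C.toFinset t) (hleaves : t.leaves ≤ 2 ^ ℓ) :
    Embeds (UT ℓ c₀ C) t :=
  main ℓ C hC c₀ C.toFinset (le_refl _) t ht hleaves
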